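/- arXiv:1703.04035 — 2 statements merged into one kernel-verified Lean document; each statement's English description precedes it below -/
import Mathlib

section
/- Edge splitting with a collinear placement: let (G', p') be obtained by edge splitting at edge (i,j) via vertex k with new vertex v placed at the midpoint of p_i and p_j (so edges (v,i), (v,j), (v,k) replace (i,j)), and let (G*, p') be the network with edges (v,i), (i,j), (v,k) instead. Then for every x in R^{d(n+1)}, x^T L' x = 0 if and only if x^T L* x = 0, where L' and L* are the respective bearing Laplacians; consequently rank(L') = rank(L*), and (G', p') is bearing rigid if and only if (G*, p') is. -/
open Matrix

open scoped Classical in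
/-- The orthogonal projection matrix `P(x) = I - x xᵀ / ‖x‖²`. -/
noncomputable def proj {d : ℕ} (x : Fin d → ℝ) : Matrix (Fin d) (Fin d) ℝ :=
  1 - (x ⬝ᵥ x)⁻¹ • Matrix.vecMulVec x x

open scoped Classical in
/-- The bearing Laplacian of the network `(G, p)`: the `dn × dn` block matrix with
`[L]_{ij} = -P(g_{ij})` for edges `(i,j)`, `0` for non-adjacent `i ≠ j`, and
`[L]_{ii} = ∑_{j ∈ N_i} P(g_{ij})`.  Since `proj` is scale-invariant,
`proj (p j - p i) = P(g_{ij})` for the unit bearing `g_{ij}`. -/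
noncomputable def bearingLaplacian {V : Type*} [Fintype V] {d : ℕ}
    (G : SimpleGraph V) (p : V → Fin d → ℝ) :
    Matrix (V × Fin d) (V × Fin d) ℝ :=
  fun q r =>
    if q.1 = r.1 then
      (∑ k ∈ Finset.univ.filter (fun k => G.Adj q.1 k), proj (p k - p q.1)) q.2 r.2
    else if G.Adj q.1 r.1 then -(proj (p r.1 - p q.1) q.2 r.2) else 0

lemma proj_smul {d : ℕ} {c : ℝ} (hc : c ≠ 0) (x : Fin d → ℝ) :
    proj (c • x) = proj x := by
  unfold proj
  congr 1
  ext s t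
  have h1 : (∑ i : Fin d, c * x i * (c * x i)) = c^2 * ∑ i : Fin d, x i * x i := by
    rw [Finset.mul_sum]; congr 1; ext i; ring
  simp only [Matrix.smul_apply, Matrix.vecMulVec_apply, dotProduct, Pi.smul_apply,
    smul_eq_mul, h1]
  rw [mul_inv]
  by_cases h : (∑ i : Fin d, x i * x i) = 0
  · simp [h]
  · field_simp
lemma proj_neg {d : ℕ} (x : Fin d → ℝ) : proj (-x) = proj x := by
  have := proj_smul (d := d) (c := -1) (by norm_num) x
  simpa using this

lemma proj_transpose {d : ℕ} (x : Fin d → ℝ) : (proj x)ᵀ = proj x := by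
  unfold proj
  ext s t
  simp [Matrix.transpose_apply, Matrix.vecMulVec_apply, Matrix.one_apply, eq_comm, mul_comm]

lemma vecMulVec_sq {d : ℕ} (x : Fin d → ℝ) :
    Matrix.vecMulVec x x * Matrix.vecMulVec x x = (x ⬝ᵥ x) • Matrix.vecMulVec x x := by
  ext s t
  simp [Matrix.mul_apply, Matrix.vecMulVec_apply, dotProduct, Finset.sum_mul, Finset.mul_sum]
  congr 1; ext i; ring

lemma proj_idem {d : ℕ} (x : Fin d → ℝ) : proj x * proj x = proj x := by
  unfold proj
  rw [sub_mul, mul_sub, mul_sub, one_mul, mul_one, Matrix.smul_mul, Matrix.mul_smul,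
    Matrix.mul_smul, one_mul, vecMulVec_sq, smul_smul, smul_smul]
  by_cases h : x ⬝ᵥ x = 0
  · have hx : x = 0 := dotProduct_self_eq_zero.mp h
    subst hx
    ext s t
    simp [Matrix.vecMulVec_apply]
  · have h2 : (x ⬝ᵥ x)⁻¹ * (x ⬝ᵥ x)⁻¹ * (x ⬝ᵥ x) = (x ⬝ᵥ x)⁻¹ := by field_simp
    rw [h2]
    abel

lemma dot_proj {d : ℕ} (x v : Fin d → ℝ) :
    v ⬝ᵥ (proj x *ᵥ v) = (proj x *ᵥ v) ⬝ᵥ (proj x *ᵥ v) := by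
  conv_lhs => rw [← proj_idem x, ← Matrix.mulVec_mulVec,
    Matrix.dotProduct_mulVec, ← proj_transpose x, Matrix.vecMul_transpose]
  rw [proj_transpose]

lemma dot_proj_nonneg {d : ℕ} (x v : Fin d → ℝ) : 0 ≤ v ⬝ᵥ (proj x *ᵥ v) := by
  rw [dot_proj]
  exact Finset.sum_nonneg fun i _ => mul_self_nonneg _

lemma dot_proj_eq_zero_iff {d : ℕ} (x v : Fin d → ℝ) :
    v ⬝ᵥ (proj x *ᵥ v) = 0 ↔ proj x *ᵥ v = 0 := by
  rw [dot_proj]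
  exact dotProduct_self_eq_zero

open scoped Classical in
lemma bL_mulVec {V : Type*} [Fintype V] {d : ℕ} (G : SimpleGraph V)
    (p : V → Fin d → ℝ) (x : V × Fin d → ℝ) (a : V) (s : Fin d) :
    (bearingLaplacian G p *ᵥ x) (a, s)
      = ∑ b ∈ Finset.univ.filter (fun b => G.Adj a b),
          (proj (p b - p a) *ᵥ (fun t => x (a, t) - x (b, t))) s := by
  have hLHS : (bearingLaplacian G p *ᵥ x) (a, s)
      = ∑ b : V, ∑ t : Fin d, bearingLaplacian G p (a, s) (b, t) * x (b, t) := by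
    rw [Matrix.mulVec, dotProduct, Fintype.sum_prod_type]
  rw [hLHS]
  have step : ∀ b : V, ∑ t : Fin d, bearingLaplacian G p (a, s) (b, t) * x (b, t)
      = (if a = b then
          ∑ t : Fin d, (∑ k ∈ Finset.univ.filter (fun k => G.Adj a k),
            proj (p k - p a)) s t * x (b, t) else 0)
        + (if G.Adj a b then ∑ t : Fin d, -(proj (p b - p a) s t) * x (b, t) else 0) := by
    intro b
    by_cases hab : a = b
    · subst hab
      simp [bearingLaplacian]
    · by_cases hadj : G.Adj a b
      · simp [bearingLaplacian, hab, hadj]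
      · simp [bearingLaplacian, hab, hadj]
  rw [Finset.sum_congr rfl (fun b _ => step b), Finset.sum_add_distrib]
  rw [Finset.sum_ite_eq Finset.univ a
    (fun b => ∑ t : Fin d, (∑ k ∈ Finset.univ.filter (fun k => G.Adj a k),
      proj (p k - p a)) s t * x (b, t))]
  simp only [Finset.mem_univ, if_true]
  rw [← Finset.sum_filter (fun b => G.Adj a b)
    (fun b => ∑ t : Fin d, -(proj (p b - p a) s t) * x (b, t))]
  simp only [Matrix.sum_apply, Finset.sum_mul, Matrix.mulVec, dotProduct, mul_sub, neg_mul,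
    Finset.sum_sub_distrib, Finset.sum_neg_distrib]
  rw [Finset.sum_comm]
  abel

noncomputable def eterm {V : Type*} {d : ℕ} (p : V → Fin d → ℝ)
    (x : V × Fin d → ℝ) (a b : V) : ℝ :=
  (fun t => x (a, t) - x (b, t)) ⬝ᵥ
    (proj (p b - p a) *ᵥ (fun t => x (a, t) - x (b, t)))

lemma eterm_nonneg {V : Type*} {d : ℕ} (p : V → Fin d → ℝ)
    (x : V × Fin d → ℝ) (a b : V) : 0 ≤ eterm p x a b :=
  dot_proj_nonneg _ _

lemma eterm_eq_zero_iff {V : Type*} {d : ℕ} (p : V → Fin d → ℝ)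
    (x : V × Fin d → ℝ) (a b : V) :
    eterm p x a b = 0 ↔ proj (p b - p a) *ᵥ (fun t => x (a, t) - x (b, t)) = 0 :=
  dot_proj_eq_zero_iff _ _

open scoped Classical in
lemma bL_quad {V : Type*} [Fintype V] {d : ℕ} (G : SimpleGraph V)
    (p : V → Fin d → ℝ) (x : V × Fin d → ℝ) :
    2 * (x ⬝ᵥ bearingLaplacian G p *ᵥ x)
      = ∑ a : V, ∑ b : V, if G.Adj a b then eterm p x a b else 0 := by
  have hQ : x ⬝ᵥ bearingLaplacian G p *ᵥ x
      = ∑ a : V, ∑ b : V, if G.Adj a b then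
          (fun s => x (a, s)) ⬝ᵥ (proj (p b - p a) *ᵥ (fun t => x (a, t) - x (b, t)))
        else 0 := by
    rw [dotProduct, Fintype.sum_prod_type]
    refine Finset.sum_congr rfl fun a _ => ?_
    have : ∀ s : Fin d, x (a, s) * (bearingLaplacian G p *ᵥ x) (a, s)
        = ∑ b : V, (if G.Adj a b then
            x (a, s) * (proj (p b - p a) *ᵥ (fun t => x (a, t) - x (b, t))) s else 0) := by
      intro s
      rw [bL_mulVec, Finset.mul_sum, Finset.sum_filter]
    rw [Finset.sum_congr rfl fun s _ => this s, Finset.sum_comm]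
    refine Finset.sum_congr rfl fun b _ => ?_
    by_cases hb : G.Adj a b
    · simp [hb, dotProduct]
    · simp [hb]
  have hQ' : x ⬝ᵥ bearingLaplacian G p *ᵥ x
      = ∑ a : V, ∑ b : V, if G.Adj a b then
          -((fun s => x (b, s)) ⬝ᵥ (proj (p b - p a) *ᵥ (fun t => x (a, t) - x (b, t))))
        else 0 := by
    rw [hQ, Finset.sum_comm]
    refine Finset.sum_congr rfl fun a _ => Finset.sum_congr rfl fun b _ => ?_
    have hadj : G.Adj b a ↔ G.Adj a b := by rw [SimpleGraph.adj_comm]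
    rw [if_congr hadj rfl rfl]
    split
    · have h1 : p a - p b = -(p b - p a) := by abel
      have h2 : (fun t => x (b, t) - x (a, t)) = -(fun t => x (a, t) - x (b, t)) := by
        funext t; simp
      rw [h1, proj_neg, h2, Matrix.mulVec_neg, dotProduct_neg]
    · rfl
  have : 2 * (x ⬝ᵥ bearingLaplacian G p *ᵥ x)
      = (x ⬝ᵥ bearingLaplacian G p *ᵥ x) + (x ⬝ᵥ bearingLaplacian G p *ᵥ x) := by ring
  rw [this]
  nth_rewrite 1 [hQ]
  rw [hQ']
  rw [← Finset.sum_add_distrib]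
  refine Finset.sum_congr rfl fun a _ => ?_
  rw [← Finset.sum_add_distrib]
  refine Finset.sum_congr rfl fun b _ => ?_
  split
  · simp only [eterm, dotProduct, sub_mul, Finset.sum_sub_distrib]
    ring
  · ring

open scoped Classical in
lemma bL_quad_eq_zero_iff {V : Type*} [Fintype V] {d : ℕ} (G : SimpleGraph V)
    (p : V → Fin d → ℝ) (x : V × Fin d → ℝ) :
    x ⬝ᵥ bearingLaplacian G p *ᵥ x = 0 ↔
      ∀ a b, G.Adj a b → proj (p b - p a) *ᵥ (fun t => x (a, t) - x (b, t)) = 0 := by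
  constructor
  · intro h a b hab
    have h2 : ∑ a : V, ∑ b : V, (if G.Adj a b then eterm p x a b else 0) = 0 := by
      rw [← bL_quad, h]; ring
    have hnn : ∀ a b : V, 0 ≤ (if G.Adj a b then eterm p x a b else 0) := by
      intro a b; split
      · exact eterm_nonneg p x a b
      · exact le_refl 0
    have h3 := (Finset.sum_eq_zero_iff_of_nonneg
      (fun a _ => Finset.sum_nonneg fun b _ => hnn a b)).mp h2 a (Finset.mem_univ a)
    have h4 := (Finset.sum_eq_zero_iff_of_nonneg
      (fun b _ => hnn a b)).mp h3 b (Finset.mem_univ b)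
    rw [if_pos hab] at h4
    exact (eterm_eq_zero_iff p x a b).mp h4
  · intro h
    have hL : bearingLaplacian G p *ᵥ x = 0 := by
      funext q
      obtain ⟨a, s⟩ := q
      rw [bL_mulVec]
      refine Finset.sum_eq_zero fun b hb => ?_
      rw [Finset.mem_filter] at hb
      rw [h a b hb.2]
      rfl
    rw [hL]
    simp

open scoped Classical in
lemma bL_mulVec_eq_zero_of {V : Type*} [Fintype V] {d : ℕ} {G : SimpleGraph V}
    {p : V → Fin d → ℝ} {x : V × Fin d → ℝ}
    (h : ∀ a b, G.Adj a b → proj (p b - p a) *ᵥ (fun t => x (a, t) - x (b, t)) = 0) :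
    bearingLaplacian G p *ᵥ x = 0 := by
  funext q
  obtain ⟨a, s⟩ := q
  rw [bL_mulVec]
  refine Finset.sum_eq_zero fun b hb => ?_
  rw [Finset.mem_filter] at hb
  rw [h a b hb.2]
  rfl

open scoped Classical in
lemma bL_quad_zero_iff_mulVec_zero {V : Type*} [Fintype V] {d : ℕ} (G : SimpleGraph V)
    (p : V → Fin d → ℝ) (x : V × Fin d → ℝ) :
    x ⬝ᵥ bearingLaplacian G p *ᵥ x = 0 ↔ bearingLaplacian G p *ᵥ x = 0 := by
  constructor
  · intro h
    exact bL_mulVec_eq_zero_of ((bL_quad_eq_zero_iff G p x).mp h)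
  · intro h
    rw [h]; simp

lemma rank_eq_of_forall_mulVec {m : Type*} [Fintype m] [DecidableEq m]
    (A B : Matrix m m ℝ) (h : ∀ x, A *ᵥ x = 0 ↔ B *ᵥ x = 0) : A.rank = B.rank := by
  have hker : LinearMap.ker A.mulVecLin = LinearMap.ker B.mulVecLin := by
    ext x
    simp only [LinearMap.mem_ker, Matrix.mulVecLin_apply]
    exact h x
  have hA := LinearMap.finrank_range_add_finrank_ker A.mulVecLin
  have hB := LinearMap.finrank_range_add_finrank_ker B.mulVecLin
  rw [hker] at hA
  unfold Matrix.rank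
  omega

lemma proj_symm_zero {V : Type*} {d : ℕ} (p : V → Fin d → ℝ) (x : V × Fin d → ℝ)
    (a b : V) (h : proj (p b - p a) *ᵥ (fun t => x (a, t) - x (b, t)) = 0) :
    proj (p a - p b) *ᵥ (fun t => x (b, t) - x (a, t)) = 0 := by
  have h1 : p a - p b = -(p b - p a) := by abel
  have h2 : (fun t => x (b, t) - x (a, t)) = -(fun t => x (a, t) - x (b, t)) := by
    funext t; simp
  rw [h1, proj_neg, h2, Matrix.mulVec_neg, h, neg_zero]

theorem stmt15 {n d : ℕ} (G : SimpleGraph (Fin n)) (p : Fin n → Fin d → ℝ)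
    (hp : Function.Injective p) (i j k : Fin n)
    (hij : G.Adj i j) (hki : k ≠ i) (hkj : k ≠ j)
    (hcol : ¬ Collinear ℝ ({p i, p j, p k} : Set (Fin d → ℝ)))
    -- the new configuration: the new vertex (encoded as `none`) is placed at
    -- the midpoint of `p i` and `p j`
    (p' : Option (Fin n) → Fin d → ℝ)
    (hp' : p' = fun o => o.elim ((1 / 2 : ℝ) • (p i + p j)) p)
    -- `G'`: edge `(i,j)` replaced by edges `(v,i)`, `(v,j)`, `(v,k)`
    (G' : SimpleGraph (Option (Fin n)))
    (hG' : G' = SimpleGraph.fromRel (fun a b =>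
      (∃ x y, a = some x ∧ b = some y ∧ G.Adj x y ∧
        ¬ (x = i ∧ y = j) ∧ ¬ (x = j ∧ y = i)) ∨
      (a = none ∧ (b = some i ∨ b = some j ∨ b = some k))))
    -- `G*`: edges `(v,i)`, `(i,j)`, `(v,k)` instead
    (Gs : SimpleGraph (Option (Fin n)))
    (hGs : Gs = SimpleGraph.fromRel (fun a b =>
      (∃ x y, a = some x ∧ b = some y ∧ G.Adj x y) ∨
      (a = none ∧ (b = some i ∨ b = some k)))) :
    (∀ x : Option (Fin n) × Fin d → ℝ,
      x ⬝ᵥ (bearingLaplacian G' p') *ᵥ x = 0 ↔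
      x ⬝ᵥ (bearingLaplacian Gs p') *ᵥ x = 0) ∧
    (bearingLaplacian G' p').rank = (bearingLaplacian Gs p').rank ∧
    ((bearingLaplacian G' p').rank = d * (n + 1) - d - 1 ↔
      (bearingLaplacian Gs p').rank = d * (n + 1) - d - 1) := by
  classical
  subst hG' hGs
  have hij' : i ≠ j := hij.ne
  have hvi_e : p' (some i) - p' none = (-(1/2) : ℝ) • (p j - p i) := by
    rw [hp']; funext t; simp; ring
  have hvj_e : p' (some j) - p' none = ((1/2) : ℝ) • (p j - p i) := by
    rw [hp']; funext t; simp; ring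
  have hij_e : p' (some j) - p' (some i) = p j - p i := by rw [hp']; funext t; simp
  have hPvi : proj (p' (some i) - p' none) = proj (p j - p i) := by
    rw [hvi_e, proj_smul (by norm_num)]
  have hPvj : proj (p' (some j) - p' none) = proj (p j - p i) := by
    rw [hvj_e, proj_smul (by norm_num)]
  have hPij : proj (p' (some j) - p' (some i)) = proj (p j - p i) := by rw [hij_e]
  -- two-out-of-three lemmas
  have h23 : ∀ x : Option (Fin n) × Fin d → ℝ,
      proj (p' (some i) - p' none) *ᵥ (fun t => x (none, t) - x (some i, t)) = 0 →
      proj (p' (some j) - p' none) *ᵥ (fun t => x (none, t) - x (some j, t)) = 0 →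
      proj (p' (some j) - p' (some i)) *ᵥ (fun t => x (some i, t) - x (some j, t)) = 0 := by
    intro x h1 h2
    rw [hPvi] at h1; rw [hPvj] at h2
    have hv : (fun t => x (some i, t) - x (some j, t))
        = (fun t => x (none, t) - x (some j, t)) - (fun t => x (none, t) - x (some i, t)) := by
      funext t; simp only [Pi.sub_apply]; ring
    rw [hPij, hv, Matrix.mulVec_sub, h1, h2, sub_zero]
  have h23' : ∀ x : Option (Fin n) × Fin d → ℝ,
      proj (p' (some i) - p' none) *ᵥ (fun t => x (none, t) - x (some i, t)) = 0 →
      proj (p' (some j) - p' (some i)) *ᵥ (fun t => x (some i, t) - x (some j, t)) = 0 →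
      proj (p' (some j) - p' none) *ᵥ (fun t => x (none, t) - x (some j, t)) = 0 := by
    intro x h1 h3
    rw [hPvi] at h1; rw [hPij] at h3
    have hv : (fun t => x (none, t) - x (some j, t))
        = (fun t => x (none, t) - x (some i, t)) + (fun t => x (some i, t) - x (some j, t)) := by
      funext t; simp only [Pi.add_apply]; ring
    rw [hPvj, hv, Matrix.mulVec_add, h1, h3, add_zero]
  -- the common condition
  have hmain : ∀ x : Option (Fin n) × Fin d → ℝ,
      (∀ a b, (SimpleGraph.fromRel (fun a b =>
        (∃ u w, a = some u ∧ b = some w ∧ G.Adj u w ∧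
          ¬ (u = i ∧ w = j) ∧ ¬ (u = j ∧ w = i)) ∨
        (a = none ∧ (b = some i ∨ b = some j ∨ b = some k)))).Adj a b →
        proj (p' b - p' a) *ᵥ (fun t => x (a, t) - x (b, t)) = 0) ↔
      (∀ a b, (SimpleGraph.fromRel (fun a b =>
        (∃ u w, a = some u ∧ b = some w ∧ G.Adj u w) ∨
        (a = none ∧ (b = some i ∨ b = some k)))).Adj a b →
        proj (p' b - p' a) *ᵥ (fun t => x (a, t) - x (b, t)) = 0) := by
    intro x
    constructor
    · intro h a b hab
      have hvi : proj (p' (some i) - p' none) *ᵥ (fun t => x (none, t) - x (some i, t)) = 0 := by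
        refine h none (some i) ?_
        rw [SimpleGraph.fromRel_adj]
        exact ⟨by simp, Or.inl (Or.inr ⟨rfl, Or.inl rfl⟩)⟩
      have hvj : proj (p' (some j) - p' none) *ᵥ (fun t => x (none, t) - x (some j, t)) = 0 := by
        refine h none (some j) ?_
        rw [SimpleGraph.fromRel_adj]
        exact ⟨by simp, Or.inl (Or.inr ⟨rfl, Or.inr (Or.inl rfl)⟩)⟩
      have hvij : proj (p' (some j) - p' (some i)) *ᵥ
          (fun t => x (some i, t) - x (some j, t)) = 0 := h23 x hvi hvj
      -- the generic edge condition
      have hEdge : ∀ u w, G.Adj u w →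
          proj (p' (some w) - p' (some u)) *ᵥ (fun t => x (some u, t) - x (some w, t)) = 0 := by
        intro u w huw
        by_cases hc1 : u = i ∧ w = j
        · rw [hc1.1, hc1.2]; exact hvij
        · by_cases hc2 : u = j ∧ w = i
          · rw [hc2.1, hc2.2]
            exact proj_symm_zero p' x (some i) (some j) hvij
          · refine h (some u) (some w) ?_
            rw [SimpleGraph.fromRel_adj]
            refine ⟨by simpa using huw.ne, Or.inl (Or.inl ⟨u, w, rfl, rfl, huw, hc1, hc2⟩)⟩
      rw [SimpleGraph.fromRel_adj] at hab
      obtain ⟨hne, hR | hR⟩ := hab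
      · rcases hR with ⟨u, w, rfl, rfl, huw⟩ | ⟨rfl, hb⟩
        · exact hEdge u w huw
        · rcases hb with rfl | rfl
          · exact hvi
          · refine h none (some k) ?_
            rw [SimpleGraph.fromRel_adj]
            exact ⟨by simp, Or.inl (Or.inr ⟨rfl, Or.inr (Or.inr rfl)⟩)⟩
      · rcases hR with ⟨u, w, rfl, rfl, huw⟩ | ⟨rfl, hb⟩
        · exact proj_symm_zero p' x (some u) (some w) (hEdge u w huw)
        · rcases hb with rfl | rfl
          · exact proj_symm_zero p' x none (some i) hvi
          · refine proj_symm_zero p' x none (some k) ?_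
            refine h none (some k) ?_
            rw [SimpleGraph.fromRel_adj]
            exact ⟨by simp, Or.inl (Or.inr ⟨rfl, Or.inr (Or.inr rfl)⟩)⟩
    · intro h a b hab
      have hvi : proj (p' (some i) - p' none) *ᵥ (fun t => x (none, t) - x (some i, t)) = 0 := by
        refine h none (some i) ?_
        rw [SimpleGraph.fromRel_adj]
        exact ⟨by simp, Or.inl (Or.inr ⟨rfl, Or.inl rfl⟩)⟩
      have hEdge : ∀ u w, G.Adj u w →
          proj (p' (some w) - p' (some u)) *ᵥ (fun t => x (some u, t) - x (some w, t)) = 0 := by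
        intro u w huw
        refine h (some u) (some w) ?_
        rw [SimpleGraph.fromRel_adj]
        exact ⟨by simpa using huw.ne, Or.inl (Or.inl ⟨u, w, rfl, rfl, huw⟩)⟩
      have hvj : proj (p' (some j) - p' none) *ᵥ (fun t => x (none, t) - x (some j, t)) = 0 :=
        h23' x hvi (hEdge i j hij)
      rw [SimpleGraph.fromRel_adj] at hab
      obtain ⟨hne, hR | hR⟩ := hab
      · rcases hR with ⟨u, w, rfl, rfl, huw, -, -⟩ | ⟨rfl, hb⟩
        · exact hEdge u w huw
        · rcases hb with rfl | rfl | rfl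
          · exact hvi
          · exact hvj
          · refine h none (some k) ?_
            rw [SimpleGraph.fromRel_adj]
            exact ⟨by simp, Or.inl (Or.inr ⟨rfl, Or.inr rfl⟩)⟩
      · rcases hR with ⟨u, w, rfl, rfl, huw, -, -⟩ | ⟨rfl, hb⟩
        · exact proj_symm_zero p' x (some u) (some w) (hEdge u w huw)
        · rcases hb with rfl | rfl | rfl
          · exact proj_symm_zero p' x none (some i) hvi
          · exact proj_symm_zero p' x none (some j) hvj
          · refine proj_symm_zero p' x none (some k) ?_
            refine h none (some k) ?_
            rw [SimpleGraph.fromRel_adj]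
            exact ⟨by simp, Or.inl (Or.inr ⟨rfl, Or.inr rfl⟩)⟩
    
  have hquad : ∀ x : Option (Fin n) × Fin d → ℝ,
      x ⬝ᵥ (bearingLaplacian (SimpleGraph.fromRel (fun a b =>
        (∃ u w, a = some u ∧ b = some w ∧ G.Adj u w ∧
          ¬ (u = i ∧ w = j) ∧ ¬ (u = j ∧ w = i)) ∨
        (a = none ∧ (b = some i ∨ b = some j ∨ b = some k)))) p') *ᵥ x = 0 ↔
      x ⬝ᵥ (bearingLaplacian (SimpleGraph.fromRel (fun a b =>
        (∃ u w, a = some u ∧ b = some w ∧ G.Adj u w) ∨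
        (a = none ∧ (b = some i ∨ b = some k)))) p') *ᵥ x = 0 := by
    intro x
    rw [bL_quad_eq_zero_iff, bL_quad_eq_zero_iff]
    exact hmain x
  have hrank : (bearingLaplacian (SimpleGraph.fromRel (fun a b =>
        (∃ u w, a = some u ∧ b = some w ∧ G.Adj u w ∧
          ¬ (u = i ∧ w = j) ∧ ¬ (u = j ∧ w = i)) ∨
        (a = none ∧ (b = some i ∨ b = some j ∨ b = some k)))) p').rank
      = (bearingLaplacian (SimpleGraph.fromRel (fun a b =>
        (∃ u w, a = some u ∧ b = some w ∧ G.Adj u w) ∨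
        (a = none ∧ (b = some i ∨ b = some k)))) p').rank := by
    refine rank_eq_of_forall_mulVec _ _ fun x => ?_
    rw [← bL_quad_zero_iff_mulVec_zero, ← bL_quad_zero_iff_mulVec_zero]
    exact hquad x
  exact ⟨hquad, hrank, by rw [hrank]⟩
end

section
/- The 4-cycle graph C_4 is generically bearing rigid in R^3: there exists a configuration p of four distinct points in R^3 (e.g., four points in 'general position' not all coplanar-collinear appropriately) such that the bearing Laplacian of (C_4, p) has rank 3*4 - 3 - 1 = 8. In particular, a generically bearing rigid graph in R^3 need not contain a Laman spanning subgraph, since C_4 has only 4 < 2*4 - 3 = 5 edges. -/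
open Matrix

open scoped Classical in
/-- A graph on `n` vertices is Laman if it has exactly `2n - 3` edges and every
subset of `k ≥ 2` vertices spans at most `2k - 3` edges. -/
def IsLaman {n : ℕ} (G : SimpleGraph (Fin n)) : Prop :=
  G.edgeFinset.card = 2 * n - 3 ∧
  ∀ S : Finset (Fin n), 2 ≤ S.card →
    (G.edgeFinset.filter (fun e => ∀ v ∈ e, v ∈ S)).card ≤ 2 * S.card - 3

/-!
Writing `x_i` for the `i`-th block of `x : V × Fin d → ℝ`, the bearing Laplacian acts by
`(L x)_i = ∑_{j ~ i} P(p_j - p_i) (x_i - x_j)`. Since `P(v) v = 0`, it annihilates the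
`(d + 1)`-dimensional space of translations and dilations `x_i = t + s p_i` of `p`, so
`rank L = dn - d - 1` exactly when its kernel is no larger. For the skew quadrilateral the twelve
kernel equations force `x_{i+1} - x_i` to be a multiple of `p_{i+1} - p_i`; the four edge
directions `e₁, e₂, (-1, -1, 1), -e₃` satisfy only one linear relation, with equal coefficients,
so all four multiples agree and `x` is a translate of a dilation of `p`.
A Laman subgraph of `C₄` would need `2 · 4 - 3 = 5` edges.
-/

theorem proj_mulVec {d : ℕ} (x u : Fin d → ℝ) :
    proj x *ᵥ u = u - ((x ⬝ᵥ u) / (x ⬝ᵥ x)) • x := by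
  ext a
  simp [proj, sub_mulVec, smul_mulVec, vecMulVec_mulVec]
  ring

theorem proj_mulVec_self {d : ℕ} (x : Fin d → ℝ) : proj x *ᵥ x = 0 := by
  by_cases hx : x ⬝ᵥ x = 0
  · rw [dotProduct_self_eq_zero.mp hx, mulVec_zero]
  · rw [proj_mulVec, div_self hx, one_smul, sub_self]

section BearingLaplacian

variable {V : Type*} {d : ℕ}

theorem bearingLaplacian_mulVec_apply [Fintype V] (G : SimpleGraph V) [DecidableRel G.Adj]
    (p : V → Fin d → ℝ) (x : V × Fin d → ℝ) (i : V) (a : Fin d) :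
    (bearingLaplacian G p *ᵥ x) (i, a) =
      ∑ j ∈ G.neighborFinset i,
        (proj (p j - p i) *ᵥ (Function.curry x i - Function.curry x j)) a := by
  classical
  have hrow : ∀ j, ∑ b, bearingLaplacian G p (i, a) (j, b) * x (j, b) =
      (if i = j then ∑ k ∈ G.neighborFinset i, (proj (p k - p i) *ᵥ Function.curry x i) a
        else 0) -
      (if G.Adj i j then (proj (p j - p i) *ᵥ Function.curry x j) a else 0) := by
    intro j
    by_cases hij : i = j
    · subst hij
      simp [bearingLaplacian, mulVec, dotProduct, Function.curry, Matrix.sum_apply, Finset.sum_mul,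
        SimpleGraph.neighborFinset_eq_filter]
      exact Finset.sum_comm
    · by_cases hadj : G.Adj i j
      · simp [bearingLaplacian, hij, hadj, mulVec, dotProduct, Function.curry]
      · simp [bearingLaplacian, hij, hadj]
  simp only [mulVec_sub, Pi.sub_apply, Finset.sum_sub_distrib]
  rw [mulVec, dotProduct, Fintype.sum_prod_type]
  simp only [hrow, Finset.sum_sub_distrib, Finset.sum_ite_eq, Finset.mem_univ, if_true,
    SimpleGraph.neighborFinset_eq_filter, Finset.sum_filter]

def trivialMotion (p : V → Fin d → ℝ) : (Fin d → ℝ) × ℝ →ₗ[ℝ] (V × Fin d → ℝ) where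
  toFun ts q := ts.1 q.2 + ts.2 * p q.1 q.2
  map_add' _ _ := by ext; simp; ring
  map_smul' _ _ := by ext; simp; ring

theorem trivialMotion_injective {p : V → Fin d → ℝ} {v w : V} (hvw : p v ≠ p w) :
    Function.Injective (trivialMotion p) := by
  rw [← LinearMap.ker_eq_bot, LinearMap.ker_eq_bot']
  rintro ⟨t, s⟩ h
  have hq : ∀ u a, t a + s * p u a = 0 := fun u a => congrFun h (u, a)
  have hs : s = 0 := by
    obtain ⟨a, ha⟩ := Function.ne_iff.mp hvw
    have : s * (p v a - p w a) = 0 := by linarith [hq v a, hq w a]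
    exact (mul_eq_zero.mp this).resolve_right (sub_ne_zero.mpr ha)
  subst hs
  ext a
  · simpa using hq v a
  · rfl

theorem range_trivialMotion_le_ker_bearingLaplacian [Fintype V] (G : SimpleGraph V)
    (p : V → Fin d → ℝ) :
    LinearMap.range (trivialMotion p) ≤ LinearMap.ker (bearingLaplacian G p).mulVecLin := by
  rintro _ ⟨⟨t, s⟩, rfl⟩
  have hdiff : ∀ i j, Function.curry (trivialMotion p (t, s)) i -
      Function.curry (trivialMotion p (t, s)) j = -s • (p j - p i) := by
    intro i j; ext a; simp [trivialMotion, Function.curry]; ring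
  ext ⟨i, a⟩
  classical
  simp [bearingLaplacian_mulVec_apply, hdiff, mulVec_neg, mulVec_smul, proj_mulVec_self]

theorem bearingLaplacian_rank_eq [Fintype V] (G : SimpleGraph V) (p : V → Fin d → ℝ) {v w : V}
    (hvw : p v ≠ p w)
    (hker : LinearMap.ker (bearingLaplacian G p).mulVecLin ≤ LinearMap.range (trivialMotion p)) :
    (bearingLaplacian G p).rank = d * Fintype.card V - d - 1 := by
  have hker_eq := le_antisymm hker (range_trivialMotion_le_ker_bearingLaplacian G p)
  have hnullity : Module.finrank ℝ (LinearMap.ker (bearingLaplacian G p).mulVecLin) = d + 1 := by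
    rw [hker_eq, LinearMap.finrank_range_of_inj (trivialMotion_injective hvw)]
    simp
  have hsum := LinearMap.finrank_range_add_finrank_ker (bearingLaplacian G p).mulVecLin
  rw [hnullity, Module.finrank_fintype_fun_eq_card, Fintype.card_prod, Fintype.card_fin] at hsum
  rw [Matrix.rank, mul_comm d]
  omega

end BearingLaplacian

noncomputable def skewQuadrilateral : Fin 4 → Fin 3 → ℝ :=
  ![![0, 0, 0], ![1, 0, 0], ![1, 1, 0], ![0, 0, 1]]

theorem skewQuadrilateral_injective : Function.Injective skewQuadrilateral := by
  intro i j h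
  fin_cases i <;> fin_cases j <;> simp_all [skewQuadrilateral, funext_iff, Fin.forall_fin_succ]

theorem ker_bearingLaplacian_skewQuadrilateral_le :
    LinearMap.ker (bearingLaplacian (SimpleGraph.cycleGraph 4) skewQuadrilateral).mulVecLin ≤
      LinearMap.range (trivialMotion skewQuadrilateral) := by
  intro x hx
  have h : ∀ i a,
      (bearingLaplacian (SimpleGraph.cycleGraph 4) skewQuadrilateral *ᵥ x) (i, a) = 0 :=
    fun i a => congrFun hx (i, a)
  simp only [bearingLaplacian_mulVec_apply, SimpleGraph.cycleGraph_neighborFinset,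
    Fin.forall_fin_succ, Fin.isValue, Fin.reduceSub, Fin.reduceAdd] at h
  simp [Finset.sum_insert, proj_mulVec, skewQuadrilateral, dotProduct, Fin.sum_univ_three,
    Function.curry] at h
  refine ⟨(Function.curry x 0, x (1, 0) - x (0, 0)), ?_⟩
  ext ⟨i, a⟩
  fin_cases i <;> fin_cases a <;> simp [trivialMotion, skewQuadrilateral] <;> linarith

theorem card_edgeFinset_cycleGraph (n : ℕ) :
    (SimpleGraph.cycleGraph (n + 3)).edgeFinset.card = n + 3 := by
  have hdeg := (SimpleGraph.cycleGraph (n + 3)).sum_degrees_eq_twice_card_edges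
  simp only [SimpleGraph.cycleGraph_degree_three_le, Finset.sum_const, Finset.card_univ,
    Fintype.card_fin, smul_eq_mul] at hdeg
  omega

theorem IsLaman.two_mul_sub_three_le_card_edgeFinset {n : ℕ} {G H : SimpleGraph (Fin n)}
    [Fintype G.edgeSet] (hH : IsLaman H) (hHG : H ≤ G) : 2 * n - 3 ≤ G.edgeFinset.card := by
  classical
  rw [← hH.1]
  exact Finset.card_le_card (SimpleGraph.edgeFinset_mono hHG)

theorem stmt18 :
    (∃ p : Fin 4 → Fin 3 → ℝ, Function.Injective p ∧
      (bearingLaplacian (SimpleGraph.cycleGraph 4) p).rank = 3 * 4 - 3 - 1) ∧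
    (SimpleGraph.cycleGraph 4).edgeFinset.card = 4 ∧
    ¬ ∃ H : SimpleGraph (Fin 4), H ≤ SimpleGraph.cycleGraph 4 ∧ IsLaman H := by
  have hcard : (SimpleGraph.cycleGraph 4).edgeFinset.card = 4 := card_edgeFinset_cycleGraph 1
  refine ⟨⟨skewQuadrilateral, skewQuadrilateral_injective, ?_⟩, hcard, ?_⟩
  · rw [bearingLaplacian_rank_eq _ _ (skewQuadrilateral_injective.ne (by decide : (0 : Fin 4) ≠ 1))
      ker_bearingLaplacian_skewQuadrilateral_le, Fintype.card_fin]
  · rintro ⟨H, hHC, hH⟩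
    have := hH.two_mul_sub_three_le_card_edgeFinset hHC
    omega
end
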